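/- Assume X is functorially finite in C, C is Krull–Schmidt (every object is a finite direct sum of objects whose endomorphism rings are local), and C has Auslander–Reiten triangles: for every indecomposable object Z there is a distinguished triangle τZ --f--> E --g--> Z → (τZ)⟦1⟧ in which f is a source morphism (f is not a split monomorphism, every morphism out of τZ that is not a split monomorphism factors through f, and any endomorphism φ of E with φ ∘ f = f is an automorphism) and g is a sink morphism (the dual notion). Then (C, C) is an X-mutation pair if and only if τX = X. -/

import Mathlib

/-!
Common definitions: the ideal of morphisms factoring through a subcategory `X`
(given as a set of objects of `C`), `X`-monic and `X`-epic morphisms, left and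
right `X`-approximations, additive subcategories closed under isomorphisms,
direct sums and direct summands, and the additive quotient category `C/X`
(realized via `CategoryTheory.Quotient` of the relation `xRel X`).
-/

open CategoryTheory Category Limits Pretriangulated

universe v u

namespace PaperStmt

variable {C : Type u} [Category.{v} C]

/-- `f` factors through an object of `X`. -/
def FactorsThru (X : Set C) {A B : C} (f : A ⟶ B) : Prop :=
  ∃ (M : C) (g : A ⟶ M) (h : M ⟶ B), M ∈ X ∧ g ≫ h = f

/-- `f : A ⟶ B` is `X`-monic: the map `Hom(B, X') → Hom(A, X')`, `g ↦ g ∘ f`,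
is surjective for every object `X'` of `X`. -/
def IsXMonic (X : Set C) {A B : C} (f : A ⟶ B) : Prop :=
  ∀ ⦃X' : C⦄, X' ∈ X → ∀ g : A ⟶ X', ∃ h : B ⟶ X', f ≫ h = g

/-- `f : A ⟶ B` is `X`-epic: the map `Hom(X', A) → Hom(X', B)`, `g ↦ f ∘ g`,
is surjective for every object `X'` of `X`. -/
def IsXEpic (X : Set C) {A B : C} (f : A ⟶ B) : Prop :=
  ∀ ⦃X' : C⦄, X' ∈ X → ∀ g : X' ⟶ B, ∃ h : X' ⟶ A, h ≫ f = g

/-- `α : A ⟶ X₀` is a left `X`-approximation of `A`: `X₀` lies in `X` and every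
morphism from `A` to an object of `X` factors through `α`. -/
def IsLeftApprox (X : Set C) {A X₀ : C} (α : A ⟶ X₀) : Prop :=
  X₀ ∈ X ∧ IsXMonic X α

/-- `β : X₀ ⟶ B` is a right `X`-approximation of `B`: `X₀` lies in `X` and every
morphism from an object of `X` to `B` factors through `β`. -/
def IsRightApprox (X : Set C) {X₀ B : C} (β : X₀ ⟶ B) : Prop :=
  X₀ ∈ X ∧ IsXEpic X β

/-- `X` is (the object class of) a full additive subcategory of `C`, closed
under isomorphisms, finite direct sums and direct summands. -/
structure IsAdditiveClosedSubcat [Preadditive C] [HasBinaryBiproducts C] (X : Set C) :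
    Prop where
  zero_mem : ∀ Z : C, IsZero Z → Z ∈ X
  iso_closed : ∀ {A B : C}, (A ≅ B) → A ∈ X → B ∈ X
  sum_closed : ∀ {A B : C}, A ∈ X → B ∈ X → (A ⊞ B) ∈ X
  summand_closed : ∀ {A B : C}, (A ⊞ B) ∈ X → A ∈ X

/-- Two morphisms are identified in the quotient category `C/X` precisely when
their difference factors through an object of `X`. -/
def xRel [Preadditive C] (X : Set C) : HomRel C :=
  fun _ _ f g => FactorsThru X (f - g)

section Triangulated

variable [Preadditive C] [HasZeroObject C] [HasShift C ℤ]
  [∀ n : ℤ, (shiftFunctor C n).Additive] [Pretriangulated C]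

/-- `(𝒜, ℬ)` is an `X`-mutation pair in the triangulated category `C`. -/
def IsMutationPair (X 𝒜 ℬ : Set C) : Prop :=
  X ⊆ 𝒜 ∧ X ⊆ ℬ ∧
  (∀ A ∈ 𝒜, ∃ (X₀ B' : C) (α : A ⟶ X₀) (β : X₀ ⟶ B') (δ : B' ⟶ A⟦(1 : ℤ)⟧),
      B' ∈ ℬ ∧ (Triangle.mk α β δ ∈ distTriang C) ∧
      IsLeftApprox X α ∧ IsRightApprox X β) ∧
  (∀ B ∈ ℬ, ∃ (A' X₀ : C) (α : A' ⟶ X₀) (β : X₀ ⟶ B) (δ : B ⟶ A'⟦(1 : ℤ)⟧),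
      A' ∈ 𝒜 ∧ (Triangle.mk α β δ ∈ distTriang C) ∧
      IsLeftApprox X α ∧ IsRightApprox X β)

end Triangulated

/-- `f : A ⟶ B` is a source morphism (minimal left almost split morphism). -/
def IsSourceMorphism {A B : C} (f : A ⟶ B) : Prop :=
  (¬ ∃ r : B ⟶ A, f ≫ r = 𝟙 A) ∧
  (∀ ⦃W : C⦄ (u : A ⟶ W), (¬ ∃ r : W ⟶ A, u ≫ r = 𝟙 A) → ∃ u' : B ⟶ W, f ≫ u' = u) ∧
  (∀ φ : B ⟶ B, f ≫ φ = f → IsIso φ)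

/-- `g : B ⟶ Z` is a sink morphism (minimal right almost split morphism). -/
def IsSinkMorphism {B Z : C} (g : B ⟶ Z) : Prop :=
  (¬ ∃ s : Z ⟶ B, s ≫ g = 𝟙 Z) ∧
  (∀ ⦃W : C⦄ (v : W ⟶ Z), (¬ ∃ s : Z ⟶ W, s ≫ v = 𝟙 Z) → ∃ v' : W ⟶ B, v' ≫ g = v) ∧
  (∀ φ : B ⟶ B, φ ≫ g = g → IsIso φ)

/-!
Serre duality turns `Hom(X', A⟦1⟧)` into the dual of `Hom(A, τX')`. If `τX ⊆ X` and `α` is a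
left `X`-approximation of `A`, every morphism `A ⟶ τX'` factors through `α`, so a morphism
`X' ⟶ A⟦1⟧` killed by `α⟦1⟧` vanishes: the cone of `α` is a right approximation. Dually,
`τ⁻¹X ⊆ X` makes the cocone of a right approximation a left approximation.

Conversely, take the Auslander–Reiten triangle `τZ ⟶ E ⟶ Z ⟶ τZ⟦1⟧` of an indecomposable
`Z ∈ X` and a mutation triangle `τZ ⟶ X₀ ⟶ B ⟶ τZ⟦1⟧`. Unless `τZ ⟶ X₀` splits, it factors
through the source morphism, so the nonzero connecting morphism `Z ⟶ τZ⟦1⟧` factors through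
`B`, hence through the right approximation `X₀ ⟶ B`, and vanishes. The sink morphism gives
the dual implication `τZ ∈ X → Z ∈ X`, and Krull–Schmidt extends both to all objects.
-/

section Additive

variable [Preadditive C] [HasBinaryBiproducts C]

lemma IsAdditiveClosedSubcat.preimage {D : Type*} [Category D] [Preadditive D]
    [HasBinaryBiproducts D] {X : Set D} (hX : IsAdditiveClosedSubcat X) (F : C ⥤ D)
    [F.Additive] : IsAdditiveClosedSubcat (F.obj ⁻¹' X) :=
  have := preservesBinaryBiproducts_of_preservesBiproducts F
  { zero_mem _ hZ := hX.zero_mem _ (F.map_isZero hZ)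
    iso_closed e h := hX.iso_closed (F.mapIso e) h
    sum_closed {A B} hA hB := hX.iso_closed (F.mapBiprod A B).symm (hX.sum_closed hA hB)
    summand_closed {A B} h := hX.summand_closed (hX.iso_closed (F.mapBiprod A B) h) }

variable [HasZeroObject C] [HasFiniteBiproducts C]

lemma IsAdditiveClosedSubcat.isClosedUnderFiniteProducts {X : Set C}
    (hX : IsAdditiveClosedSubcat X) : ObjectProperty.IsClosedUnderFiniteProducts (· ∈ X) :=
  have : ObjectProperty.IsClosedUnderIsomorphisms (· ∈ X) := ⟨hX.iso_closed⟩
  have : ObjectProperty.ContainsZero (· ∈ X) :=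
    ⟨⟨_, isZero_zero C, hX.zero_mem _ (isZero_zero C)⟩⟩
  have : ObjectProperty.IsClosedUnderBinaryProducts (· ∈ X) := ⟨by
    rintro Y ⟨p⟩
    refine hX.iso_closed ?_
      (hX.sum_closed (p.prop_diag_obj ⟨.left⟩) (p.prop_diag_obj ⟨.right⟩))
    exact biprod.isoProd _ _ ≪≫ IsLimit.conePointUniqueUpToIso (prodIsProd _ _)
      ((IsLimit.postcomposeHomEquiv (diagramIsoPair p.diag) _).2 p.isLimit)⟩
  .mk'

lemma IsAdditiveClosedSubcat.biproduct_mem {X : Set C} (hX : IsAdditiveClosedSubcat X)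
    {n : ℕ} (f : Fin n → C) (hf : ∀ i, f i ∈ X) : (⨁ f) ∈ X :=
  have := hX.isClosedUnderFiniteProducts
  hX.iso_closed (biproduct.isoProduct f).symm (ObjectProperty.prop_pi _ f hf)

end Additive

section SerreDuality

variable [Preadditive C] [HasShift C ℤ] {k : Type*} [Field k] [Linear k C] {τ : C ⥤ C}
  (e : ∀ A B : C, (A ⟶ B⟦(1 : ℤ)⟧) ≃ₗ[k] ((B ⟶ τ.obj A) →ₗ[k] k))

lemma eq_zero_of_comp_shift_eq_zero_of_forall_factors
    (he₂ : ∀ {A B B' : C} (h : B ⟶ B') (φ : A ⟶ (B⟦(1 : ℤ)⟧)) (g : B' ⟶ τ.obj A),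
      e A B' (φ ≫ (h⟦(1 : ℤ)⟧')) g = e A B φ (h ≫ g))
    {W A X₀ : C} (φ : W ⟶ A⟦(1 : ℤ)⟧) (α : A ⟶ X₀)
    (hα : ∀ u : A ⟶ τ.obj W, ∃ v, α ≫ v = u) (hφ : φ ≫ α⟦(1 : ℤ)⟧' = 0) : φ = 0 := by
  apply (e W A).injective
  ext u
  obtain ⟨v, rfl⟩ := hα u
  rw [← he₂, hφ, map_zero, map_zero, LinearMap.zero_apply, LinearMap.zero_apply]

lemma comp_shift_eq_zero_of_forall_factors
    (he₁ : ∀ {A' A B : C} (f : A' ⟶ A) (φ : A ⟶ (B⟦(1 : ℤ)⟧)) (g : B ⟶ τ.obj A'),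
      e A' B (f ≫ φ) g = e A B φ (g ≫ τ.map f))
    (he₂ : ∀ {A B B' : C} (h : B ⟶ B') (φ : A ⟶ (B⟦(1 : ℤ)⟧)) (g : B' ⟶ τ.obj A),
      e A B' (φ ≫ (h⟦(1 : ℤ)⟧')) g = e A B φ (h ≫ g))
    {A X₀ B W : C} (β : X₀ ⟶ B) (δ : B ⟶ A⟦(1 : ℤ)⟧) (hβδ : β ≫ δ = 0) (u : A ⟶ W)
    (hβ : ∀ w : W ⟶ τ.obj B, ∃ w', w' ≫ τ.map β = w) : δ ≫ u⟦(1 : ℤ)⟧' = 0 := by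
  apply (e B W).injective
  ext w
  obtain ⟨w', rfl⟩ := hβ w
  rw [he₂, ← assoc, ← he₁, hβδ, map_zero, map_zero, LinearMap.zero_apply, LinearMap.zero_apply]

end SerreDuality

lemma exists_comp_map_eq_of_isXEpic {X : Set C} {τ : C ⥤ C} [τ.Full] {X₀ B : C}
    {β : X₀ ⟶ B} (hβ : IsXEpic X β) {Y W : C} (hY : Y ∈ X) (ψ : τ.obj Y ≅ W)
    (w : W ⟶ τ.obj B) : ∃ w' : W ⟶ τ.obj X₀, w' ≫ τ.map β = w := by
  obtain ⟨t, ht⟩ := τ.map_surjective (ψ.hom ≫ w)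
  obtain ⟨t', rfl⟩ := hβ hY t
  exact ⟨ψ.inv ≫ τ.map t', by rw [assoc, ← τ.map_comp, ht, Iso.inv_hom_id_assoc]⟩

section Pretriangulated

variable [Preadditive C] [HasZeroObject C] [HasShift C ℤ]
  [∀ n : ℤ, (shiftFunctor C n).Additive] [Pretriangulated C]

lemma Triangle.yoneda_exact₁ (T : Triangle C) (hT : T ∈ distTriang C) {W : C}
    (u : T.obj₁ ⟶ W) (hu : T.mor₃ ≫ u⟦(1 : ℤ)⟧' = 0) :
    ∃ v : T.obj₂ ⟶ W, u = T.mor₁ ≫ v := by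
  obtain ⟨w, hw⟩ := Triangle.yoneda_exact₃ _ (rot_of_distTriang _ hT) (u⟦(1 : ℤ)⟧') hu
  obtain ⟨v, rfl⟩ := (shiftFunctor C (1 : ℤ)).map_surjective w
  change T.obj₂ ⟶ W at v
  refine ⟨-v, (shiftFunctor C (1 : ℤ)).map_injective ?_⟩
  change u⟦(1 : ℤ)⟧' = (-T.mor₁⟦(1 : ℤ)⟧') ≫ v⟦(1 : ℤ)⟧' at hw
  rw [Functor.map_comp, Functor.map_neg, hw, Preadditive.neg_comp, Preadditive.comp_neg]

lemma mor₃_ne_zero_of_not_splitEpi {A E Z : C} {f : A ⟶ E} {g : E ⟶ Z}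
    {h : Z ⟶ A⟦(1 : ℤ)⟧} (hT : Triangle.mk f g h ∈ distTriang C)
    (hg : ¬ ∃ s : Z ⟶ E, s ≫ g = 𝟙 Z) : h ≠ 0 := by
  intro h0
  obtain ⟨s, hs⟩ := Triangle.coyoneda_exact₃ _ hT (𝟙 Z) (by subst h0; exact comp_zero)
  exact hg ⟨s, hs.symm⟩

namespace IsAdditiveClosedSubcat

variable {X : Set C}

lemma isStableUnderRetracts (hX : IsAdditiveClosedSubcat X) :
    ObjectProperty.IsStableUnderRetracts (· ∈ X) where
  of_retract {A M} ρ hM := by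
    obtain ⟨B, β, δ, hT⟩ := distinguished_cocone_triangle ρ.i
    have : Mono ρ.i := ⟨fun _ _ h => by simpa using h =≫ ρ.r⟩
    obtain ⟨ψ, -⟩ := exists_iso_binaryBiproduct_of_distTriang _ hT
      (Triangle.mor₃_eq_zero_of_mono₁ _ hT this)
    exact hX.summand_closed (hX.iso_closed ψ hM)

lemma subset_of_forall_isLocalRing (hX : IsAdditiveClosedSubcat X)
    (hKS : ∀ A : C, ∃ (n : ℕ) (f : Fin n → C),
      (∀ i, IsLocalRing (End (f i))) ∧ Nonempty (A ≅ ⨁ f))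
    {X' : Set C} (hX' : IsAdditiveClosedSubcat X')
    (h : ∀ Z : C, IsLocalRing (End Z) → Z ∈ X → Z ∈ X') : X ⊆ X' := by
  have := hX.isStableUnderRetracts
  intro A hA
  obtain ⟨n, f, hloc, ⟨ψ⟩⟩ := hKS A
  refine hX'.iso_closed ψ.symm (hX'.biproduct_mem f fun i => h _ (hloc i) ?_)
  exact ObjectProperty.IsStableUnderRetracts.of_biproduct _ f (hX.iso_closed ψ hA) i

end IsAdditiveClosedSubcat

variable {X : Set C} {A X₀ B : C} {α : A ⟶ X₀} {β : X₀ ⟶ B} {δ : B ⟶ A⟦(1 : ℤ)⟧}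

lemma eq_zero_of_comp_shift_mor₁_eq_zero (hT : Triangle.mk α β δ ∈ distTriang C)
    (hβ : IsXEpic X β) {Z : C} (hZ : Z ∈ X) (h : Z ⟶ A⟦(1 : ℤ)⟧)
    (hh : h ≫ α⟦(1 : ℤ)⟧' = 0) : h = 0 := by
  obtain ⟨t, rfl⟩ := Triangle.coyoneda_exact₁ _ hT h hh
  obtain ⟨t', rfl⟩ := hβ hZ t
  have h23 : β ≫ δ = 0 := comp_distTriang_mor_zero₂₃ _ hT
  change (t' ≫ β) ≫ δ = 0
  rw [assoc, h23, comp_zero]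

lemma eq_zero_of_mor₂_comp_eq_zero (hT : Triangle.mk α β δ ∈ distTriang C)
    (hα : IsXMonic X α) {W : C} (hW : W ∈ X) (h : B ⟶ W⟦(1 : ℤ)⟧) (hh : β ≫ h = 0) :
    h = 0 := by
  obtain ⟨w, rfl⟩ := Triangle.yoneda_exact₃ _ hT h hh
  obtain ⟨u, rfl⟩ := (shiftFunctor C (1 : ℤ)).map_surjective w
  obtain ⟨v, rfl⟩ := hα hW u
  have h31 : δ ≫ α⟦(1 : ℤ)⟧' = 0 := comp_distTriang_mor_zero₃₁ _ hT
  change δ ≫ (α ≫ v)⟦(1 : ℤ)⟧' = 0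
  rw [Functor.map_comp, ← assoc, h31, zero_comp]

lemma mem_of_isSourceMorphism (hX : IsAdditiveClosedSubcat X) {E Z : C} {f : A ⟶ E}
    {g : E ⟶ Z} {h : Z ⟶ A⟦(1 : ℤ)⟧} (hAR : Triangle.mk f g h ∈ distTriang C)
    (hf : IsSourceMorphism f) (hg : IsSinkMorphism g) (hZ : Z ∈ X)
    (hT : Triangle.mk α β δ ∈ distTriang C) (hX₀ : X₀ ∈ X) (hβ : IsXEpic X β) : A ∈ X := by
  by_cases hsplit : ∃ r : X₀ ⟶ A, α ≫ r = 𝟙 A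
  · obtain ⟨r, hr⟩ := hsplit
    exact hX.isStableUnderRetracts.of_retract ⟨α, r, hr⟩ hX₀
  · obtain ⟨α', rfl⟩ := hf.2.1 α hsplit
    refine absurd (eq_zero_of_comp_shift_mor₁_eq_zero hT hβ hZ h ?_)
      (mor₃_ne_zero_of_not_splitEpi hAR hg.1)
    have h31 : h ≫ f⟦(1 : ℤ)⟧' = 0 := comp_distTriang_mor_zero₃₁ _ hAR
    rw [Functor.map_comp, ← assoc, h31, zero_comp]

lemma mem_of_isSinkMorphism (hX : IsAdditiveClosedSubcat X) {A' E : C} {f : A' ⟶ E}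
    {g : E ⟶ B} {h : B ⟶ A'⟦(1 : ℤ)⟧} (hAR : Triangle.mk f g h ∈ distTriang C)
    (hg : IsSinkMorphism g) (hA' : A' ∈ X)
    (hT : Triangle.mk α β δ ∈ distTriang C) (hX₀ : X₀ ∈ X) (hα : IsXMonic X α) : B ∈ X := by
  by_cases hsplit : ∃ s : B ⟶ X₀, s ≫ β = 𝟙 B
  · obtain ⟨s, hs⟩ := hsplit
    exact hX.isStableUnderRetracts.of_retract ⟨s, β, hs⟩ hX₀
  · obtain ⟨β', rfl⟩ := hg.2.1 β hsplit
    refine absurd (eq_zero_of_mor₂_comp_eq_zero hT hα hA' h ?_)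
      (mor₃_ne_zero_of_not_splitEpi hAR hg.1)
    have h23 : g ≫ h = 0 := comp_distTriang_mor_zero₂₃ _ hAR
    rw [assoc, h23, comp_zero]

variable {k : Type*} [Field k] [Linear k C] {τ : C ⥤ C}
  (e : ∀ A B : C, (A ⟶ B⟦(1 : ℤ)⟧) ≃ₗ[k] ((B ⟶ τ.obj A) →ₗ[k] k))

lemma isXEpic_mor₂_of_isXMonic_mor₁
    (he₂ : ∀ {A B B' : C} (h : B ⟶ B') (φ : A ⟶ (B⟦(1 : ℤ)⟧)) (g : B' ⟶ τ.obj A),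
      e A B' (φ ≫ (h⟦(1 : ℤ)⟧')) g = e A B φ (h ≫ g))
    (hτ : ∀ X' ∈ X, τ.obj X' ∈ X) (hT : Triangle.mk α β δ ∈ distTriang C)
    (hα : IsXMonic X α) : IsXEpic X β := by
  intro X' hX' g
  have h31 : δ ≫ α⟦(1 : ℤ)⟧' = 0 := comp_distTriang_mor_zero₃₁ _ hT
  have hgδ : g ≫ δ = 0 := eq_zero_of_comp_shift_eq_zero_of_forall_factors e he₂ _ α
    (hα (hτ X' hX')) (by rw [assoc, h31, comp_zero])
  obtain ⟨g', hg'⟩ := Triangle.coyoneda_exact₃ _ hT g hgδ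
  exact ⟨g', hg'.symm⟩

lemma isXMonic_mor₁_of_isXEpic_mor₂ [τ.Full]
    (he₁ : ∀ {A' A B : C} (f : A' ⟶ A) (φ : A ⟶ (B⟦(1 : ℤ)⟧)) (g : B ⟶ τ.obj A'),
      e A' B (f ≫ φ) g = e A B φ (g ≫ τ.map f))
    (he₂ : ∀ {A B B' : C} (h : B ⟶ B') (φ : A ⟶ (B⟦(1 : ℤ)⟧)) (g : B' ⟶ τ.obj A),
      e A B' (φ ≫ (h⟦(1 : ℤ)⟧')) g = e A B φ (h ≫ g))
    (hτ : ∀ X' ∈ X, ∃ Y ∈ X, Nonempty (τ.obj Y ≅ X')) (hT : Triangle.mk α β δ ∈ distTriang C)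
    (hβ : IsXEpic X β) : IsXMonic X α := by
  intro X' hX' u
  obtain ⟨Y, hY, ⟨ψ⟩⟩ := hτ X' hX'
  obtain ⟨v, hv⟩ := Triangle.yoneda_exact₁ _ hT u
    (comp_shift_eq_zero_of_forall_factors e he₁ he₂ β δ (comp_distTriang_mor_zero₂₃ _ hT) u
      (exists_comp_map_eq_of_isXEpic hβ hY ψ))
  exact ⟨v, hv.symm⟩

end Pretriangulated

/-- in a Krull–Schmidt, `k`-linear, Hom-finite triangulated
category with Auslander–Reiten (Serre) duality and Auslander–Reiten triangles,
if `X` is functorially finite then `(C, C)` is an `X`-mutation pair if and only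
if `τX = X`. -/
theorem statement12 [Preadditive C] [HasZeroObject C] [HasShift C ℤ]
    [∀ n : ℤ, (shiftFunctor C n).Additive] [Pretriangulated C] [HasBinaryBiproducts C]
    [HasFiniteBiproducts C]
    (k : Type*) [Field k] [CategoryTheory.Linear k C]
    [∀ A B : C, FiniteDimensional k (A ⟶ B)]
    (τ : C ⥤ C) [τ.Additive] [τ.IsEquivalence]
    (e : ∀ A B : C, (A ⟶ (B⟦(1 : ℤ)⟧)) ≃ₗ[k] ((B ⟶ τ.obj A) →ₗ[k] k))
    (he₁ : ∀ {A' A B : C} (f : A' ⟶ A) (φ : A ⟶ (B⟦(1 : ℤ)⟧)) (g : B ⟶ τ.obj A'),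
      e A' B (f ≫ φ) g = e A B φ (g ≫ τ.map f))
    (he₂ : ∀ {A B B' : C} (h : B ⟶ B') (φ : A ⟶ (B⟦(1 : ℤ)⟧)) (g : B' ⟶ τ.obj A),
      e A B' (φ ≫ (h⟦(1 : ℤ)⟧')) g = e A B φ (h ≫ g))
    (X : Set C) (hX : IsAdditiveClosedSubcat X)
    -- `X` is functorially finite
    (hcov : ∀ A : C, ∃ (X₀ : C) (α : A ⟶ X₀), IsLeftApprox X α)
    (hcontra : ∀ B : C, ∃ (X₀ : C) (β : X₀ ⟶ B), IsRightApprox X β)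
    -- `C` is Krull–Schmidt
    (hKS : ∀ A : C, ∃ (n : ℕ) (f : Fin n → C),
      (∀ i, IsLocalRing (End (f i))) ∧ Nonempty (A ≅ ⨁ f))
    -- `C` has Auslander–Reiten triangles
    (hAR : ∀ Z : C, IsLocalRing (End Z) →
      ∃ (E : C) (f : τ.obj Z ⟶ E) (g : E ⟶ Z) (h : Z ⟶ ((τ.obj Z)⟦(1 : ℤ)⟧)),
        (Triangle.mk f g h ∈ distTriang C) ∧ IsSourceMorphism f ∧ IsSinkMorphism g) :
    IsMutationPair X Set.univ Set.univ ↔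
      ((∀ X' ∈ X, τ.obj X' ∈ X) ∧ (∀ X' ∈ X, ∃ Y ∈ X, Nonempty (τ.obj Y ≅ X'))) := by
  constructor
  · rintro ⟨-, -, hleft, hright⟩
    have hτX : X ⊆ τ.obj ⁻¹' X := hX.subset_of_forall_isLocalRing hKS (hX.preimage τ)
      fun Z hZ hZX => by
        obtain ⟨E, f, g, h, hAR, hf, hg⟩ := hAR Z hZ
        obtain ⟨X₀, B, α, β, δ, -, hT, hα, hβ⟩ := hleft (τ.obj Z) trivial
        exact (mem_of_isSourceMorphism hX hAR hf hg hZX hT hα.1 hβ.2 : τ.obj Z ∈ X)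
    have hτ'X : τ.obj ⁻¹' X ⊆ X := (hX.preimage τ).subset_of_forall_isLocalRing hKS hX
      fun Z hZ hτZ => by
        obtain ⟨E, f, g, h, hAR, -, hg⟩ := hAR Z hZ
        obtain ⟨A, X₀, α, β, δ, -, hT, hα, hβ⟩ := hright Z trivial
        exact mem_of_isSinkMorphism hX hAR hg hτZ hT hβ.1 hα.2
    refine ⟨hτX, fun X' hX' => ⟨τ.objPreimage X', hτ'X ?_, ⟨τ.objObjPreimageIso X'⟩⟩⟩
    exact hX.iso_closed (τ.objObjPreimageIso X').symm hX'
  · rintro ⟨hτ, hτ'⟩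
    refine ⟨fun _ _ => trivial, fun _ _ => trivial, fun A _ => ?_, fun B _ => ?_⟩
    · obtain ⟨X₀, α, hα⟩ := hcov A
      obtain ⟨B, β, δ, hT⟩ := distinguished_cocone_triangle α
      exact ⟨X₀, B, α, β, δ, trivial, hT, hα, hα.1,
        isXEpic_mor₂_of_isXMonic_mor₁ e he₂ hτ hT hα.2⟩
    · obtain ⟨X₀, β, hβ⟩ := hcontra B
      obtain ⟨A, α, δ, hT⟩ := distinguished_cocone_triangle₁ β
      exact ⟨A, X₀, α, β, δ, trivial, hT,
        ⟨hβ.1, isXMonic_mor₁_of_isXEpic_mor₂ e he₁ he₂ hτ' hT hβ.2⟩, hβ⟩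

end PaperStmt
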